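/- For all real numbers p, q, p_s, p_s^e with 0 ≤ p, q, p_s, p_s^e ≤ 1, the discriminant Δ = B² C² + A C (A E − B D) satisfies Δ ≥ 0. -/
import Mathlib


noncomputable section

/-- A = p q [p_s² (1−p_s^e)(p+q−2) + (p_s^e)² (1−p_s)(p+q)] -/
def Acoef (p q ps pse : ℝ) : ℝ :=
  p * q * (ps ^ 2 * (1 - pse) * (p + q - 2) + pse ^ 2 * (1 - ps) * (p + q))
/-- B = p q (p+q)(2 p_s p_s^e − p_s − p_s^e) -/
def Bcoef (p q ps pse : ℝ) : ℝ := p * q * (p + q) * (2 * ps * pse - ps - pse)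
/-- C = (p_s p_s^e − p_s − p_s^e) p_s p_s^e (p+q−1)² (p+q) -/
def Ccoef (p q ps pse : ℝ) : ℝ :=
  (ps * pse - ps - pse) * ps * pse * (p + q - 1) ^ 2 * (p + q)
/-- D = (p_s p_s^e − p_s − p_s^e)(p_s + p_s^e)(1−p−q)(p+q)² -/
def Dcoef (p q ps pse : ℝ) : ℝ :=
  (ps * pse - ps - pse) * (ps + pse) * (1 - p - q) * (p + q) ^ 2
/-- E = (p_s p_s^e − p_s − p_s^e)(p+q)³ -/
def Ecoef (p q ps pse : ℝ) : ℝ := (ps * pse - ps - pse) * (p + q) ^ 3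

set_option maxHeartbeats 1000000 in
/-- Δ ≥ 0 for all parameters in [0,1]. -/
theorem stmt4 (p q ps pse : ℝ)
    (hp : p ∈ Set.Icc (0 : ℝ) 1) (hq : q ∈ Set.Icc (0 : ℝ) 1)
    (hs : ps ∈ Set.Icc (0 : ℝ) 1) (he : pse ∈ Set.Icc (0 : ℝ) 1) :
    0 ≤ Bcoef p q ps pse ^ 2 * Ccoef p q ps pse ^ 2 +
      Acoef p q ps pse * Ccoef p q ps pse *
        (Acoef p q ps pse * Ecoef p q ps pse - Bcoef p q ps pse * Dcoef p q ps pse) := by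
  obtain ⟨hp0, hp1⟩ := hp
  obtain ⟨hq0, hq1⟩ := hq
  obtain ⟨hs0, hs1⟩ := hs
  obtain ⟨he0, he1⟩ := he
  set a := Acoef p q ps pse with ha
  set b := Bcoef p q ps pse with hb
  have e1 : b ^ 2 * Ccoef p q ps pse ^ 2 +
      a * Ccoef p q ps pse * (a * Ecoef p q ps pse - b * Dcoef p q ps pse)
      = ((ps * pse - ps - pse) ^ 2 * (ps * pse) * ((p + q - 1) * (p + q)) ^ 2)
        * ((ps * (b * (p + q - 1)) + (p + q) * a) * (pse * (b * (p + q - 1)) + (p + q) * a)) := by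
    unfold Ccoef Dcoef Ecoef
    ring
  have e3 : ps * (b * (p + q - 1)) + (p + q) * a
      = p * q * (p + q) * (pse - ps) * ((p + q) * pse * (1 - ps) + ps) := by
    rw [ha, hb]; unfold Acoef Bcoef; ring
  have e4 : pse * (b * (p + q - 1)) + (p + q) * a
      = p * q * (p + q) * (ps - pse) * (ps * (1 - pse) * (p + q - 2) - pse) := by
    rw [ha, hb]; unfold Acoef Bcoef; ring
  rw [e1, e3, e4]
  have e5 : p * q * (p + q) * (pse - ps) * ((p + q) * pse * (1 - ps) + ps) *
      (p * q * (p + q) * (ps - pse) * (ps * (1 - pse) * (p + q - 2) - pse))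
      = (p * q * (p + q) * (ps - pse)) ^ 2 * ((p + q) * pse * (1 - ps) + ps) *
        (pse + ps * (1 - pse) * (2 - (p + q))) := by ring
  rw [e5]
  have h1 : 0 ≤ pse + ps * (1 - pse) * (2 - (p + q)) := by
    have : 0 ≤ ps * (1 - pse) * (2 - (p + q)) :=
      mul_nonneg (mul_nonneg hs0 (by linarith)) (by linarith)
    linarith
  have h2 : 0 ≤ (p + q) * pse * (1 - ps) + ps := by
    have : 0 ≤ (p + q) * pse * (1 - ps) :=
      mul_nonneg (mul_nonneg (by linarith) he0) (by linarith)
    linarith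
  have hpre : 0 ≤ (ps * pse - ps - pse) ^ 2 * (ps * pse) * ((p + q - 1) * (p + q)) ^ 2 :=
    mul_nonneg (mul_nonneg (sq_nonneg _) (mul_nonneg hs0 he0)) (sq_nonneg _)
  exact mul_nonneg hpre (mul_nonneg (mul_nonneg (sq_nonneg _) h2) h1)
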